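/- Let 0 < α < 1 and 0 < t < q be real numbers. Then there exists exactly one pair (m, s) ∈ ℝ × (0, ∞) satisfying the system q = exp(m + s·Φ⁻¹(α)) and α·t = exp(m + s²/2)·Φ((log q − m)/s − s). Moreover, the component s of this solution satisfies 0 < s < φ(Φ⁻¹(α))·q/(α·t) + Φ⁻¹(α). -/

import Mathlib

open Real MeasureTheory Set Filter Topology

/-- The standard normal density `φ(u) = (2π)^{-1/2} exp(-u²/2)`. -/
noncomputable def stdNormalPDF (u : ℝ) : ℝ := (Real.sqrt (2 * Real.pi))⁻¹ * Real.exp (-u ^ 2 / 2)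

/-- The standard normal cumulative distribution function `Φ`. -/
noncomputable def stdNormalCDF (x : ℝ) : ℝ := ∫ u in Set.Iic x, stdNormalPDF u

/-- The standard normal quantile function `Φ⁻¹`. -/
noncomputable def stdNormalQuantile (p : ℝ) : ℝ := Function.invFun stdNormalCDF p

lemma pdf_pos (u : ℝ) : 0 < stdNormalPDF u := by
  unfold stdNormalPDF
  positivity

lemma pdf_cont : Continuous stdNormalPDF := by
  unfold stdNormalPDF
  continuity

lemma pdf_eq (u : ℝ) : stdNormalPDF u = (Real.sqrt (2 * Real.pi))⁻¹ * Real.exp (-(1/2) * u ^ 2) := by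
  unfold stdNormalPDF; ring_nf

lemma pdf_integrable : Integrable stdNormalPDF := by
  have h := (integrable_exp_neg_mul_sq (by norm_num : (0:ℝ) < 1/2)).const_mul
    (Real.sqrt (2 * Real.pi))⁻¹
  refine h.congr ?_
  filter_upwards with u
  rw [pdf_eq]

lemma id_mul_pdf_integrable : Integrable (fun u : ℝ => u * stdNormalPDF u) := by
  have h := (integrable_mul_exp_neg_mul_sq (by norm_num : (0:ℝ) < 1/2)).const_mul
    (Real.sqrt (2 * Real.pi))⁻¹
  refine h.congr ?_
  filter_upwards with u
  rw [pdf_eq]; ring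

lemma neg_pdf_hasDeriv (x : ℝ) : HasDerivAt (fun u => -stdNormalPDF u) (x * stdNormalPDF x) x := by
  have h1 : HasDerivAt (fun u : ℝ => -u ^ 2 / 2) (-x) x := by
    have := (hasDerivAt_pow 2 x).neg.div_const 2
    simpa using this.congr_deriv (by ring)
  have h2 := (h1.exp.const_mul (Real.sqrt (2 * Real.pi))⁻¹).neg
  refine h2.congr_deriv ?_
  unfold stdNormalPDF; ring

lemma sq_tendsto_atTop : Tendsto (fun u : ℝ => u ^ 2) atTop atTop :=
  tendsto_pow_atTop two_ne_zero

lemma sq_tendsto_atBot : Tendsto (fun u : ℝ => u ^ 2) atBot atTop := by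
  have h := sq_tendsto_atTop.comp (tendsto_neg_atBot_atTop : Tendsto (fun x : ℝ => -x) atBot atTop)
  simpa only [Function.comp_def, neg_sq] using h

lemma pdf_tendsto (l : Filter ℝ) (h : Tendsto (fun u : ℝ => u ^ 2) l atTop) :
    Tendsto stdNormalPDF l (𝓝 0) := by
  have h3 : Tendsto (fun u : ℝ => -u ^ 2 / 2) l atBot := by
    apply Tendsto.atBot_div_const (by norm_num : (0:ℝ) < 2)
    exact tendsto_neg_atTop_atBot.comp h
  have h4 : Tendsto (fun u : ℝ => Real.exp (-u ^ 2 / 2)) l (𝓝 0) :=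
    Real.tendsto_exp_atBot.comp h3
  have h5 := h4.const_mul (Real.sqrt (2 * Real.pi))⁻¹
  rw [mul_zero] at h5
  exact h5

lemma integral_pdf : ∫ u, stdNormalPDF u = 1 := by
  have h : ∫ u : ℝ, Real.exp (-(1/2) * u ^ 2) = Real.sqrt (Real.pi / (1/2)) :=
    integral_gaussian (1/2)
  have h2 : ∫ u, stdNormalPDF u
      = (Real.sqrt (2 * Real.pi))⁻¹ * ∫ u : ℝ, Real.exp (-(1/2) * u ^ 2) := by
    rw [← integral_const_mul]
    congr 1; funext u; rw [pdf_eq]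
  rw [h2, h, show Real.pi / (1/2) = 2 * Real.pi by ring]
  rw [inv_mul_cancel₀ (ne_of_gt (Real.sqrt_pos.2 (by positivity)))]

lemma pdf_neg (x : ℝ) : stdNormalPDF (-x) = stdNormalPDF x := by
  unfold stdNormalPDF; rw [neg_pow]; norm_num

lemma integral_Iic_id_mul_pdf (a : ℝ) :
    ∫ u in Iic a, u * stdNormalPDF u = -stdNormalPDF a := by
  have ht : Tendsto (fun u => -stdNormalPDF u) atBot (𝓝 0) := by
    have := (pdf_tendsto atBot sq_tendsto_atBot).neg
    simpa using this
  have h := integral_Iic_of_hasDerivAt_of_tendsto' (a := a)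
    (f := fun u => -stdNormalPDF u) (f' := fun u => u * stdNormalPDF u)
    (fun x _ => neg_pdf_hasDeriv x) id_mul_pdf_integrable.integrableOn ht
  simpa using h

lemma integral_Ioi_id_mul_pdf (a : ℝ) :
    ∫ u in Ioi a, u * stdNormalPDF u = stdNormalPDF a := by
  have ht : Tendsto (fun u => -stdNormalPDF u) atTop (𝓝 0) := by
    have := (pdf_tendsto atTop sq_tendsto_atTop).neg
    simpa using this
  have h := integral_Ioi_of_hasDerivAt_of_tendsto' (a := a)
    (f := fun u => -stdNormalPDF u) (f' := fun u => u * stdNormalPDF u)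
    (fun x _ => neg_pdf_hasDeriv x) id_mul_pdf_integrable.integrableOn ht
  simpa using h

lemma cdf_eq (a x : ℝ) :
    stdNormalCDF x = stdNormalCDF a + ∫ u in a..x, stdNormalPDF u := by
  rw [← intervalIntegral.integral_Iic_sub_Iic pdf_integrable.integrableOn pdf_integrable.integrableOn]
  unfold stdNormalCDF; ring

lemma cdf_hasDeriv (x : ℝ) : HasDerivAt stdNormalCDF (stdNormalPDF x) x := by
  have heq : stdNormalCDF = fun y => stdNormalCDF 0 + ∫ u in (0:ℝ)..y, stdNormalPDF u :=
    funext (cdf_eq 0)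
  rw [heq]
  exact (intervalIntegral.integral_hasDerivAt_right
    (pdf_cont.intervalIntegrable _ _)
    (pdf_cont.stronglyMeasurableAtFilter _ _)
    pdf_cont.continuousAt).const_add _

lemma cdf_cont : Continuous stdNormalCDF :=
  continuous_iff_continuousAt.2 fun x => (cdf_hasDeriv x).continuousAt

lemma cdf_strictMono : StrictMono stdNormalCDF :=
  strictMono_of_deriv_pos fun x => by
    rw [(cdf_hasDeriv x).deriv]; exact pdf_pos x

lemma cdf_nonneg (x : ℝ) : 0 ≤ stdNormalCDF x :=
  setIntegral_nonneg measurableSet_Iic fun u _ => (pdf_pos u).le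

lemma mills (x : ℝ) (hx : 0 < x) : x * stdNormalCDF (-x) < stdNormalPDF x := by
  have hint1 : IntegrableOn (fun u => -u * stdNormalPDF u) (Iic (-x)) :=
    (id_mul_pdf_integrable.neg.congr (by filter_upwards with u; simp [neg_mul])).integrableOn
  have hint2 : IntegrableOn (fun u => x * stdNormalPDF u) (Iic (-x)) :=
    (pdf_integrable.const_mul x).integrableOn
  have key : ∫ u in Iic (-x), -u * stdNormalPDF u = stdNormalPDF x := by
    have : ∫ u in Iic (-x), -u * stdNormalPDF u
        = -∫ u in Iic (-x), u * stdNormalPDF u := by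
      rw [← integral_neg]; congr 1; funext u; ring
    rw [this, integral_Iic_id_mul_pdf, neg_neg, pdf_neg]
  have hxi : x * stdNormalCDF (-x) = ∫ u in Iic (-x), x * stdNormalPDF u := by
    rw [integral_const_mul]; rfl
  have hpos : 0 < ∫ u in Iic (-x), (-u * stdNormalPDF u - x * stdNormalPDF u) := by
    refine (setIntegral_pos_iff_support_of_nonneg_ae ?_ (hint1.sub hint2)).2 ?_
    · refine (ae_restrict_iff' measurableSet_Iic).2 (ae_of_all _ fun u hu => ?_)
      have : x ≤ -u := by simpa using neg_le_neg hu.out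
      simp only [Pi.zero_apply, Pi.sub_apply]
      nlinarith [pdf_pos u]
    · refine lt_of_lt_of_le (b := volume (Iio (-x))) (by simp [Real.volume_Iio])
        (measure_mono ?_)
      intro u hu
      have hu' : u < -x := hu
      refine ⟨?_, le_of_lt hu'⟩
      simp only [Function.mem_support, Pi.sub_apply]
      have hxu : x < -u := by linarith
      have hvpos : 0 < -u * stdNormalPDF u - x * stdNormalPDF u := by
        nlinarith [pdf_pos u]
      exact ne_of_gt hvpos
  rw [integral_sub hint1 hint2, key, ← hxi] at hpos
  linarith

lemma tail_le (x : ℝ) (hx : 0 < x) :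
    ∫ u in Ioi x, stdNormalPDF u ≤ stdNormalPDF x / x := by
  have h1 : ∫ u in Ioi x, stdNormalPDF u ≤ ∫ u in Ioi x, (u / x) * stdNormalPDF u := by
    refine setIntegral_mono_on pdf_integrable.integrableOn ?_ measurableSet_Ioi ?_
    · refine ((id_mul_pdf_integrable.div_const x).congr ?_).integrableOn
      filter_upwards with u; ring
    · intro u hu
      have h1u : 1 ≤ u / x := (one_le_div hx).2 (le_of_lt hu)
      nlinarith [pdf_pos u]
  have h2 : ∫ u in Ioi x, (u / x) * stdNormalPDF u = stdNormalPDF x / x := by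
    have : ∫ u in Ioi x, (u / x) * stdNormalPDF u
        = (1/x) * ∫ u in Ioi x, u * stdNormalPDF u := by
      rw [← integral_const_mul]; congr 1; funext u; ring
    rw [this, integral_Ioi_id_mul_pdf]; ring
  linarith

lemma cdf_exists (α : ℝ) (h0 : 0 < α) (h1 : α < 1) : ∃ x, stdNormalCDF x = α := by
  set c := min α (1 - α) with hc
  have hc0 : 0 < c := by simp [hc]; constructor <;> linarith
  set x₀ : ℝ := max 1 (1 / c + 1) with hx₀
  have hx₀1 : 1 ≤ x₀ := le_max_left _ _
  have hx₀0 : 0 < x₀ := by linarith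
  have hpdf1 : stdNormalPDF x₀ ≤ 1 := by
    unfold stdNormalPDF
    have h1 : Real.exp (-x₀ ^ 2 / 2) ≤ 1 := Real.exp_le_one_iff.2 (by nlinarith)
    have h2 : (Real.sqrt (2 * Real.pi))⁻¹ ≤ 1 := by
      rw [inv_le_one_iff₀]; right
      rw [Real.one_le_sqrt]; nlinarith [Real.pi_gt_three]
    nlinarith [Real.exp_pos (-x₀ ^ 2 / 2), Real.sqrt_nonneg (2 * Real.pi)]
  have hsmall : stdNormalPDF x₀ / x₀ < c := by
    have h1c : 1 / c < x₀ := lt_of_lt_of_le (by linarith) (le_max_right _ _)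
    have h2 : (1:ℝ) < c * x₀ := by
      have := mul_lt_mul_of_pos_left h1c hc0
      rwa [mul_one_div_cancel (ne_of_gt hc0)] at this
    have h3 : 1 / x₀ < c := by rw [div_lt_iff₀ hx₀0]; linarith
    have h4 : stdNormalPDF x₀ / x₀ ≤ 1 / x₀ := by gcongr
    linarith
  have hlo : stdNormalCDF (-x₀) < α := by
    have hm := mills x₀ hx₀0
    have : stdNormalCDF (-x₀) < stdNormalPDF x₀ / x₀ := by
      rw [lt_div_iff₀ hx₀0]; linarith [mills x₀ hx₀0]
    have : stdNormalCDF (-x₀) < c := lt_trans this hsmall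
    exact lt_of_lt_of_le this (min_le_left _ _)
  have hhi : α < stdNormalCDF x₀ := by
    have hsplit : stdNormalCDF x₀ + ∫ u in Ioi x₀, stdNormalPDF u = 1 := by
      rw [show stdNormalCDF x₀ = ∫ u in Iic x₀, stdNormalPDF u from rfl,
        intervalIntegral.integral_Iic_add_Ioi pdf_integrable.integrableOn pdf_integrable.integrableOn,
        integral_pdf]
    have ht := tail_le x₀ hx₀0
    have : stdNormalPDF x₀ / x₀ < 1 - α :=
      lt_of_lt_of_le hsmall (min_le_right _ _)
    linarith
  have := intermediate_value_Icc (by linarith : -x₀ ≤ x₀) cdf_cont.continuousOn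
  obtain ⟨x, _, hx⟩ := this ⟨le_of_lt hlo, le_of_lt hhi⟩
  exact ⟨x, hx⟩

lemma quantile_eq (α : ℝ) (h0 : 0 < α) (h1 : α < 1) :
    stdNormalCDF (stdNormalQuantile α) = α :=
  Function.invFun_eq (cdf_exists α h0 h1)

lemma exp_shift (z s : ℝ) :
    Real.exp (s ^ 2 / 2 - s * z) * stdNormalPDF (s - z) = stdNormalPDF z := by
  unfold stdNormalPDF
  rw [mul_left_comm, ← Real.exp_add]
  congr 2
  ring

noncomputable def gAux (z s : ℝ) : ℝ :=
  Real.exp (s ^ 2 / 2 - s * z) * stdNormalCDF (z - s)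

lemma gAux_nonneg (z s : ℝ) : 0 ≤ gAux z s :=
  mul_nonneg (Real.exp_pos _).le (cdf_nonneg _)

lemma gAux_hasDeriv (z s : ℝ) :
    HasDerivAt (gAux z) ((s - z) * gAux z s - stdNormalPDF z) s := by
  have hp : HasDerivAt (fun s : ℝ => s ^ 2 / 2 - s * z) (s - z) s := by
    have h := ((hasDerivAt_pow 2 s).div_const 2).sub ((hasDerivAt_id s).mul_const z)
    refine h.congr_deriv ?_
    norm_num
  have h1 : HasDerivAt (fun s : ℝ => Real.exp (s ^ 2 / 2 - s * z))
      (Real.exp (s ^ 2 / 2 - s * z) * (s - z)) s := hp.exp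
  have h2 : HasDerivAt (fun s : ℝ => stdNormalCDF (z - s)) (-stdNormalPDF (z - s)) s := by
    have hz : HasDerivAt (fun s : ℝ => z - s) (-1) s := (hasDerivAt_id s).const_sub z
    have := (cdf_hasDeriv (z - s)).comp s hz
    simpa [Function.comp_def] using this
  have h := h1.mul h2
  have hkey : Real.exp (s ^ 2 / 2 - s * z) * stdNormalPDF (z - s) = stdNormalPDF z := by
    rw [show z - s = -(s - z) by ring, pdf_neg, exp_shift]
  refine h.congr_deriv ?_
  unfold gAux
  rw [← hkey]
  ring

lemma gAux_deriv_neg (z s : ℝ) : (s - z) * gAux z s - stdNormalPDF z < 0 := by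
  rcases le_or_gt s z with h | h
  · have h1 : (s - z) * gAux z s ≤ 0 :=
      mul_nonpos_of_nonpos_of_nonneg (by linarith) (gAux_nonneg z s)
    have := pdf_pos z
    linarith
  · have hm := mills (s - z) (by linarith)
    rw [neg_sub] at hm
    have he : (0:ℝ) < Real.exp (s ^ 2 / 2 - s * z) := Real.exp_pos _
    have h2 := mul_lt_mul_of_pos_left hm he
    have hkey := exp_shift z s
    unfold gAux
    nlinarith
  
lemma gAux_strictAnti (z : ℝ) : StrictAnti (gAux z) :=
  strictAnti_of_deriv_neg fun s => by
    rw [(gAux_hasDeriv z s).deriv]; exact gAux_deriv_neg z s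

lemma gAux_cont (z : ℝ) : Continuous (gAux z) :=
  continuous_iff_continuousAt.2 fun s => (gAux_hasDeriv z s).continuousAt

lemma gAux_zero (z : ℝ) : gAux z 0 = stdNormalCDF z := by
  simp [gAux]

lemma gAux_lt (z s : ℝ) (h : z < s) : gAux z s < stdNormalPDF z / (s - z) := by
  have hm := mills (s - z) (by linarith)
  rw [neg_sub] at hm
  have he : (0:ℝ) < Real.exp (s ^ 2 / 2 - s * z) := Real.exp_pos _
  have h2 := mul_lt_mul_of_pos_left hm he
  have hkey := exp_shift z s
  rw [lt_div_iff₀ (by linarith : (0:ℝ) < s - z)]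
  unfold gAux
  nlinarith

/-- For `0 < α < 1` and `0 < t < q` there is exactly one pair `(m, s) ∈ ℝ × (0, ∞)` with
`q = exp(m + s·Φ⁻¹(α))` and `α·t = exp(m + s²/2)·Φ((log q - m)/s - s)`; moreover the
component `s` of the solution satisfies `0 < s < φ(Φ⁻¹(α))·q/(α·t) + Φ⁻¹(α)`. -/
theorem lognormal_quantile_ES_matching (α q t : ℝ) (hα0 : 0 < α) (hα1 : α < 1)
    (ht0 : 0 < t) (htq : t < q) :
    (∃! p : ℝ × ℝ, 0 < p.2 ∧
        q = Real.exp (p.1 + p.2 * stdNormalQuantile α) ∧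
        α * t = Real.exp (p.1 + p.2 ^ 2 / 2) *
          stdNormalCDF ((Real.log q - p.1) / p.2 - p.2)) ∧
    (∀ m s : ℝ, 0 < s →
        q = Real.exp (m + s * stdNormalQuantile α) →
        α * t = Real.exp (m + s ^ 2 / 2) * stdNormalCDF ((Real.log q - m) / s - s) →
        0 < s ∧ s < stdNormalPDF (stdNormalQuantile α) * q / (α * t) + stdNormalQuantile α) := by
  set z := stdNormalQuantile α with hzdef
  have hq0 : 0 < q := lt_trans ht0 htq
  have hαt : 0 < α * t := mul_pos hα0 ht0
  have hzcdf : stdNormalCDF z = α := quantile_eq α hα0 hα1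
  set r : ℝ := α * t / q with hrdef
  have hr0 : 0 < r := div_pos hαt hq0
  have hrα : r < α := by
    rw [hrdef, div_lt_iff₀ hq0]
    nlinarith
  -- characterization of solutions
  have hchar : ∀ m s : ℝ, 0 < s →
      ((q = Real.exp (m + s * z) ∧
        α * t = Real.exp (m + s ^ 2 / 2) * stdNormalCDF ((Real.log q - m) / s - s))
      ↔ (m = Real.log q - s * z ∧ gAux z s = r)) := by
    intro m s hs
    constructor
    · rintro ⟨h1, h2⟩
      have hlog : Real.log q = m + s * z := by rw [h1, Real.log_exp]
      have hm : m = Real.log q - s * z := by linarith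
      refine ⟨hm, ?_⟩
      have harg : (Real.log q - m) / s - s = z - s := by
        rw [hm]; field_simp; ring
      rw [harg] at h2
      have hexp : Real.exp (m + s ^ 2 / 2) = q * Real.exp (s ^ 2 / 2 - s * z) := by
        rw [hm, show Real.log q - s * z + s ^ 2 / 2 = Real.log q + (s ^ 2 / 2 - s * z) by ring,
          Real.exp_add, Real.exp_log hq0]
      rw [hexp] at h2
      unfold gAux
      rw [hrdef, eq_div_iff (ne_of_gt hq0)]
      linear_combination -h2
    · rintro ⟨hm, hg⟩
      have harg : (Real.log q - m) / s - s = z - s := by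
        rw [hm]; field_simp; ring
      constructor
      · rw [hm, show Real.log q - s * z + s * z = Real.log q by ring, Real.exp_log hq0]
      · rw [harg, hm,
          show Real.log q - s * z + s ^ 2 / 2 = Real.log q + (s ^ 2 / 2 - s * z) by ring,
          Real.exp_add, Real.exp_log hq0]
        unfold gAux at hg
        rw [hrdef, eq_div_iff (ne_of_gt hq0)] at hg
        linear_combination -hg
  set S : ℝ := stdNormalPDF z * q / (α * t) + z with hSdef
  have hSz : z < S := by
    have : 0 < stdNormalPDF z * q / (α * t) := div_pos (mul_pos (pdf_pos z) hq0) hαt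
    rw [hSdef]; linarith
  have hSr : stdNormalPDF z / (S - z) = r := by
    rw [hSdef, hrdef, show stdNormalPDF z * q / (α * t) + z - z
      = stdNormalPDF z * q / (α * t) by ring]
    have hp : stdNormalPDF z ≠ 0 := (pdf_pos z).ne'
    field_simp
  have hgS : gAux z S < r := by
    have h1 := gAux_lt z S hSz
    rw [hSr] at h1
    exact h1
  have h0gt : r < gAux z 0 := by rw [gAux_zero, hzcdf]; exact hrα
  have hS0 : (0:ℝ) ≤ S := by
    by_contra hcon
    push_neg at hcon
    have := (gAux_strictAnti z) hcon
    linarith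
  obtain ⟨s₀, hs₀mem, hgs₀⟩ :=
    intermediate_value_Icc' hS0 (gAux_cont z).continuousOn ⟨le_of_lt hgS, le_of_lt h0gt⟩
  have hs₀pos : 0 < s₀ := by
    rcases eq_or_lt_of_le hs₀mem.1 with heq | h
    · exfalso; rw [← heq, gAux_zero, hzcdf] at hgs₀; linarith
    · exact h
  -- the bound, valid for any solution of gAux z s = r
  have hbound : ∀ s : ℝ, gAux z s = r → s < S := by
    intro s hg
    by_contra hcon
    push_neg at hcon
    have hzs : z < s := lt_of_lt_of_le hSz hcon
    have h1 := gAux_lt z s hzs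
    have h2 : stdNormalPDF z / (s - z) ≤ stdNormalPDF z / (S - z) := by
      gcongr
      · exact (pdf_pos z).le
    rw [hSr] at h2
    linarith
  constructor
  · refine ⟨(Real.log q - s₀ * z, s₀), ⟨hs₀pos, ?_⟩, ?_⟩
    · exact (hchar _ s₀ hs₀pos).2 ⟨rfl, hgs₀⟩
    · rintro ⟨m, s⟩ ⟨hs, h1, h2⟩
      obtain ⟨hm, hg⟩ := (hchar m s hs).1 ⟨h1, h2⟩
      have hss : s = s₀ := (gAux_strictAnti z).injective (hgs₀ ▸ hg)
      subst hss
      exact Prod.ext hm rfl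
  · intro m s hs h1 h2
    obtain ⟨hm, hg⟩ := (hchar m s hs).1 ⟨h1, h2⟩
    exact ⟨hs, hbound s hg⟩
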